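/- arXiv:2107.11483 — 2 statements merged into one kernel-verified Lean document; each statement's English description precedes it below -/
import Mathlib

section
/- Let Ψ(z) = 1/(z − z₀) be a Möbius transform with z₀ in the bounded complement G⁻ of the unbounded region G. A function f is a solution of the Riemann–Hilbert problem Re[A f⁺] = γ on Γ (f analytic in G, f(∞)=0) if and only if f̂(w) := (f∘Ψ⁻¹)(w)/w is a solution of the Riemann–Hilbert problem Re[Â f̂⁺] = γ on Ψ(Γ) (f̂ analytic in the bounded region Ĝ = Ψ(G)), where Â(s) := ζ(s)A(s) and ζ(s) = 1/(η(s) − z₀). -/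
open Complex MeasureTheory Filter Topology

noncomputable section

/-- A real function on `ℝ` is Hölder continuous (with some positive exponent). -/
def IsHolderR (f : ℝ → ℝ) : Prop := ∃ C α : NNReal, 0 < α ∧ HolderWith C α f

/-- Membership in the space `H` of real Hölder continuous `2π`-periodic functions
on the total parameter domain `J = J₁ ∪ ⋯ ∪ J_m`. -/
def memH {m : ℕ} (φ : Fin m → ℝ → ℝ) : Prop :=
  ∀ k, IsHolderR (φ k) ∧ Function.Periodic (φ k) (2 * Real.pi)

/-- The geometric/analytic setting: an unbounded multiply connected region `G` of
connectivity `m`, whose complement consists of `m` bounded simply connected regions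
`G₁, …, G_m` with smooth boundary curves `Γ_k` parametrized by `2π`-periodic twice
continuously differentiable `η_k` (clockwise oriented, i.e. winding number `-1`
about points of `G_k`), together with a nonvanishing continuously differentiable
coefficient function `A` on the boundary. -/
structure RHSetup (m : ℕ) where
  eta : Fin m → ℝ → ℂ
  A : Fin m → ℝ → ℂ
  Gk : Fin m → Set ℂ
  eta_per : ∀ k, Function.Periodic (eta k) (2 * Real.pi)
  eta_smooth : ∀ k, ContDiff ℝ 2 (eta k)
  eta_deriv_ne : ∀ k s, deriv (eta k) s ≠ 0
  eta_inj : ∀ k, Set.InjOn (eta k) (Set.Ico 0 (2 * Real.pi))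
  Gk_open : ∀ k, IsOpen (Gk k)
  Gk_bounded : ∀ k, Bornology.IsBounded (Gk k)
  Gk_conn : ∀ k, IsConnected (Gk k)
  Gk_simply_conn : ∀ k, SimplyConnectedSpace (Gk k)
  Gk_frontier : ∀ k, frontier (Gk k) = Set.range (eta k)
  Gk_disj : ∀ j k, j ≠ k → closure (Gk j) ∩ closure (Gk k) = ∅
  eta_orient : ∀ k, ∀ z ∈ Gk k,
    (2 * Real.pi * I)⁻¹ * ∫ t in (0:ℝ)..(2 * Real.pi),
      deriv (eta k) t / (eta k t - z) = -1
  A_smooth : ∀ k, ContDiff ℝ 1 (A k)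
  A_per : ∀ k, Function.Periodic (A k) (2 * Real.pi)
  A_ne : ∀ k s, A k s ≠ 0

namespace RHSetup
variable {m : ℕ} (S : RHSetup m)

/-- The unbounded region `G` (set of finite points; `∞ ∈ G` as well). -/
def G : Set ℂ := (⋃ k, closure (S.Gk k))ᶜ

/-- The bounded complement `G⁻ = G₁ ∪ ⋯ ∪ G_m`. -/
def Gm : Set ℂ := ⋃ k, S.Gk k

/-- The complex kernel `M(s,t) + i N(s,t) = (1/π) (A(s)/A(t)) η̇(t)/(η(t)-η(s))`,
with `s` in the parameter interval `J_k` and `t` in `J_j`. -/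
def ker (k j : Fin m) (s t : ℝ) : ℂ :=
  (1 / Real.pi) * (S.A k s / S.A j t) * deriv (S.eta j) t / (S.eta j t - S.eta k s)

/-- The Fredholm integral operator `N` with the generalized Neumann kernel. -/
def opN (φ : Fin m → ℝ → ℝ) (k : Fin m) (s : ℝ) : ℝ :=
  ∑ j, ∫ t in (0:ℝ)..(2 * Real.pi), (S.ker k j s t).im * φ j t

/-- The singular integral operator `M` (the integral is a Cauchy principal value). -/
def opM (φ : Fin m → ℝ → ℝ) (k : Fin m) (s : ℝ) : ℝ :=
  ∑ j, ∫ t in (0:ℝ)..(2 * Real.pi), (S.ker k j s t).re * φ j t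

/-- The Cauchy-type integral `Φ(z) = (1/(2πi)) ∫_Γ ((γ+iμ)/A)/(η-z) dη`. -/
def Phi (γ μ : Fin m → ℝ → ℝ) (z : ℂ) : ℂ :=
  (2 * Real.pi * I)⁻¹ * ∑ j, ∫ t in (0:ℝ)..(2 * Real.pi),
    (((γ j t : ℂ) + I * (μ j t : ℂ)) / S.A j t) * deriv (S.eta j) t / (S.eta j t - z)

/-- `fb` is the boundary value function of `f` from inside `G` (left of `Γ`). -/
def BVplus (f : ℂ → ℂ) (fb : Fin m → ℝ → ℂ) : Prop :=
  ∀ k s, Tendsto f (nhdsWithin (S.eta k s) S.G) (nhds (fb k s))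

/-- `gb` is the boundary value function of `g` from `G⁻` (right of `Γ`). -/
def BVminus (g : ℂ → ℂ) (gb : Fin m → ℝ → ℂ) : Prop :=
  ∀ k s, Tendsto g (nhdsWithin (S.eta k s) (S.Gk k)) (nhds (gb k s))

/-- `f` is analytic in the unbounded region `G` with `f(∞) = 0`. -/
def AnlG (f : ℂ → ℂ) : Prop :=
  DifferentiableOn ℂ f S.G ∧ Tendsto f (cocompact ℂ) (nhds 0)

/-- `φ ∈ S⁺`: `φ = A f⁺` (real) for some `f` analytic in `G`, `f(∞)=0`. -/
def memSplus (φ : Fin m → ℝ → ℝ) : Prop :=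
  ∃ f fb, S.AnlG f ∧ S.BVplus f fb ∧ ∀ k s, S.A k s * fb k s = (φ k s : ℂ)

/-- `φ ∈ S⁻`: `φ = A g⁻` (real) for some `g` analytic in `G⁻`. -/
def memSminus (φ : Fin m → ℝ → ℝ) : Prop :=
  ∃ g gb, DifferentiableOn ℂ g S.Gm ∧ S.BVminus g gb ∧
    ∀ k s, S.A k s * gb k s = (φ k s : ℂ)

/-- `γ ∈ R⁺`: `γ = Re[A f⁺]` for some `f` analytic in `G`, `f(∞)=0`. -/
def memRplus (γ : Fin m → ℝ → ℝ) : Prop :=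
  ∃ f fb, S.AnlG f ∧ S.BVplus f fb ∧ ∀ k s, (S.A k s * fb k s).re = γ k s

/-- `γ ∈ R⁻`: `γ = Re[A g⁻]` for some `g` analytic in `G⁻`. -/
def memRminus (γ : Fin m → ℝ → ℝ) : Prop :=
  ∃ g gb, DifferentiableOn ℂ g S.Gm ∧ S.BVminus g gb ∧
    ∀ k s, (S.A k s * gb k s).re = γ k s

/-- `κ j` is the winding number (index) of `A` on the curve `Γ_j`:
`∮_{Γ_j} A'/A = 2πi κ_j`. -/
def IsIndex (κ : Fin m → ℤ) : Prop :=
  ∀ k, (2 * Real.pi * I) * (κ k : ℂ) =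
    ∫ t in (0:ℝ)..(2 * Real.pi), deriv (S.A k) t / S.A k t

end RHSetup


private lemma RH_compactU {m : ℕ} (S : RHSetup m) : IsCompact (⋃ k, closure (S.Gk k)) :=
  isCompact_iUnion fun k => (S.Gk_bounded k).isCompact_closure

private lemma RH_z0_not_G {m : ℕ} (S : RHSetup m) {z₀ : ℂ} (hz₀ : z₀ ∈ S.Gm) : z₀ ∉ S.G := by
  obtain ⟨j, hj⟩ := Set.mem_iUnion.1 hz₀
  intro hG
  exact hG (Set.mem_iUnion.2 ⟨j, subset_closure hj⟩)

private lemma RH_eta_ne {m : ℕ} (S : RHSetup m) {z₀ : ℂ} (hz₀ : z₀ ∈ S.Gm) (k : Fin m) (s : ℝ) :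
    S.eta k s - z₀ ≠ 0 := by
  rw [sub_ne_zero]
  obtain ⟨j, hj⟩ := Set.mem_iUnion.1 hz₀
  intro h
  have h2 : S.eta k s ∈ closure (S.Gk k) \ S.Gk k := by
    rw [← (S.Gk_open k).frontier_eq, S.Gk_frontier]; exact ⟨s, rfl⟩
  by_cases hjk : j = k
  · subst hjk
    rw [← h] at hj
    exact h2.2 hj
  · have hmem : z₀ ∈ closure (S.Gk j) ∩ closure (S.Gk k) :=
      ⟨subset_closure hj, h ▸ h2.1⟩
    rw [S.Gk_disj j k hjk] at hmem
    exact hmem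

/-- Let `Ψ(z) = 1/(z - z₀)` with `z₀ ∈ G⁻`, mapping the
unbounded region `G` onto the bounded region `Ĝ = Ψ(G)` (with `Ψ(∞) = 0 ∈ Ĝ`).
A function `f` solves the RH problem `Re[A f⁺] = γ` on `Γ` (`f` analytic in `G`,
`f(∞)=0`) if and only if `f̂(w) = (f ∘ Ψ⁻¹)(w)/w` solves the RH problem
`Re[Â f̂⁺] = γ` on `Ψ(Γ)` (`f̂` analytic in `Ĝ`), where `Â = ζ·A` and
`ζ(s) = 1/(η(s) - z₀)`. -/
theorem rhp_unbounded_iff_rhp_bounded {m : ℕ} (S : RHSetup m)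
    (z₀ : ℂ) (hz₀ : z₀ ∈ S.Gm)
    (γ : Fin m → ℝ → ℝ) (hγ : memH γ) (f : ℂ → ℂ) :
    (S.AnlG f ∧ ∃ fb : Fin m → ℝ → ℂ, S.BVplus f fb ∧
        ∀ k s, (S.A k s * fb k s).re = γ k s)
    ↔
    (∃ fhat : ℂ → ℂ,
      (∀ w : ℂ, w ≠ 0 → fhat w = f (z₀ + w⁻¹) / w) ∧
      DifferentiableOn ℂ fhat (insert 0 ((fun z => (z - z₀)⁻¹) '' S.G)) ∧
      ∃ fbh : Fin m → ℝ → ℂ,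
        (∀ k s, Tendsto fhat
          (nhdsWithin ((S.eta k s - z₀)⁻¹) (insert 0 ((fun z => (z - z₀)⁻¹) '' S.G)))
          (nhds (fbh k s))) ∧
        ∀ k s, ((S.eta k s - z₀)⁻¹ * S.A k s * fbh k s).re = γ k s) := by
  have hz0G : z₀ ∉ S.G := RH_z0_not_G S hz₀
  have hGne : ∀ z ∈ S.G, z - z₀ ≠ 0 := by
    intro z hz
    rw [sub_ne_zero]
    rintro rfl
    exact hz0G hz
  set Img : Set ℂ := (fun z => (z - z₀)⁻¹) '' S.G with hImg
  have himg : ∀ w ∈ Img, w ≠ 0 ∧ z₀ + w⁻¹ ∈ S.G := by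
    rintro w ⟨z, hz, rfl⟩
    refine ⟨inv_ne_zero (hGne z hz), ?_⟩
    rw [inv_inv]
    simpa using hz
  have hGev : ∀ᶠ z in cocompact ℂ, z ∈ S.G := (RH_compactU S).compl_mem_cocompact
  constructor
  · rintro ⟨hA, fb, hBV, hRe⟩
    have hmem : Img ∈ 𝓝[≠] (0:ℂ) := by
      obtain ⟨r, hr⟩ := (RH_compactU S).isBounded.subset_closedBall z₀
      have hR : (0:ℝ) < max r 1 := lt_of_lt_of_le one_pos (le_max_right r 1)
      refine mem_nhdsWithin.2 ⟨Metric.ball 0 (max r 1)⁻¹, Metric.isOpen_ball,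
        Metric.mem_ball_self (by positivity), ?_⟩
      rintro w ⟨hwball, hw0⟩
      have hw0' : w ≠ 0 := hw0
      have hwn : ‖w‖ < (max r 1)⁻¹ := by simpa [Metric.mem_ball] using hwball
      have hwpos : 0 < ‖w‖ := norm_pos_iff.2 hw0'
      have hinv : max r 1 < ‖w‖⁻¹ := by
        have h5 : ‖w‖ * (max r 1) < 1 := by
          have := mul_lt_mul_of_pos_right hwn hR
          rwa [inv_mul_cancel₀ (ne_of_gt hR)] at this
        have h6 : 0 < ‖w‖⁻¹ := by positivity
        nlinarith [mul_pos hwpos h6, inv_mul_cancel₀ (ne_of_gt hwpos)]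
      have hzG : z₀ + w⁻¹ ∈ S.G := by
        intro hmem2
        have := hr hmem2
        rw [Metric.mem_closedBall] at this
        have hd : dist (z₀ + w⁻¹) z₀ = ‖w‖⁻¹ := by
          rw [dist_eq_norm]
          simp [norm_inv]
        rw [hd] at this
        have h7 := le_max_left r 1
        linarith
      exact ⟨z₀ + w⁻¹, hzG, by show (z₀ + w⁻¹ - z₀)⁻¹ = w; rw [add_sub_cancel_left, inv_inv]⟩
    set g0 : ℂ → ℂ := fun w => f (z₀ + w⁻¹) / w with hg0
    have hd0 : DifferentiableOn ℂ g0 Img := by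
      rintro w hw
      obtain ⟨hw0, hwG⟩ := himg w hw
      have hinner : DifferentiableWithinAt ℂ (fun w : ℂ => z₀ + w⁻¹) Img w :=
        ((differentiableAt_const z₀).add (differentiableAt_inv hw0)).differentiableWithinAt
      have hcomp : DifferentiableWithinAt ℂ (fun w => f (z₀ + w⁻¹)) Img w :=
        DifferentiableWithinAt.comp w (hA.1 _ hwG) hinner (fun x hx => (himg x hx).2)
      exact hcomp.div differentiableWithinAt_id hw0
    have hmapc : Tendsto (fun w : ℂ => z₀ + w⁻¹) (𝓝[≠] (0:ℂ)) (cocompact ℂ) := by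
      rw [← Metric.cobounded_eq_cocompact, ← tendsto_norm_atTop_iff_cobounded]
      have h1 : Tendsto (fun w : ℂ => ‖w‖) (𝓝[≠] (0:ℂ)) (𝓝[>] 0) := by
        rw [tendsto_nhdsWithin_iff]
        constructor
        · have := (continuous_norm.tendsto (0:ℂ)).mono_left
            (nhdsWithin_le_nhds : 𝓝[≠] (0:ℂ) ≤ 𝓝 0)
          simpa using this
        · filter_upwards [self_mem_nhdsWithin] with w hw
          exact norm_pos_iff.2 hw
      have h2 : Tendsto (fun w : ℂ => ‖w‖⁻¹ + -‖z₀‖) (𝓝[≠] (0:ℂ)) atTop :=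
        tendsto_atTop_add_const_right _ _ (tendsto_inv_nhdsGT_zero.comp h1)
      refine tendsto_atTop_mono (fun w => ?_) h2
      have h3 : ‖(z₀ + w⁻¹) + -z₀‖ ≤ ‖z₀ + w⁻¹‖ + ‖-z₀‖ := norm_add_le _ _
      have h4 : ‖(z₀ + w⁻¹) + -z₀‖ = ‖w‖⁻¹ := by
        rw [add_comm z₀ w⁻¹, add_assoc, add_neg_cancel, add_zero, norm_inv]
      rw [h4, norm_neg] at h3
      linarith
    have hT : Tendsto (fun w : ℂ => f (z₀ + w⁻¹)) (𝓝[≠] (0:ℂ)) (𝓝 0) := hA.2.comp hmapc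
    have ho : (fun w : ℂ => g0 w - g0 0) =o[𝓝[≠] (0:ℂ)] fun w : ℂ => (w - 0)⁻¹ := by
      have hg00 : g0 0 = 0 := by simp [hg0]
      simp only [hg00, sub_zero]
      rw [Asymptotics.isLittleO_iff_tendsto']
      · apply hT.congr'
        filter_upwards [self_mem_nhdsWithin] with w hw
        have hw' : w ≠ 0 := hw
        rw [hg0]
        field_simp
      · filter_upwards [self_mem_nhdsWithin] with w hw h
        exact absurd h (inv_ne_zero hw)
    have hdf : DifferentiableOn ℂ (Function.update g0 0 (limUnder (𝓝[≠] (0:ℂ)) g0))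
        (insert 0 Img) :=
      Complex.differentiableOn_update_limUnder_insert_of_isLittleO hmem hd0 ho
    refine ⟨Function.update g0 0 (limUnder (𝓝[≠] (0:ℂ)) g0), ?_, hdf, ?_⟩
    · intro w hw
      rw [Function.update_of_ne hw]
    · refine ⟨fun k s => fb k s / (S.eta k s - z₀)⁻¹, ?_, ?_⟩
      · intro k s
        have hη : S.eta k s - z₀ ≠ 0 := RH_eta_ne S hz₀ k s
        have hw₀0 : (S.eta k s - z₀)⁻¹ ≠ 0 := inv_ne_zero hη
        have hev : ∀ᶠ w in 𝓝[insert 0 Img] ((S.eta k s - z₀)⁻¹), w ≠ (0:ℂ) :=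
          (isOpen_compl_singleton.eventually_mem hw₀0).filter_mono nhdsWithin_le_nhds
        have hmap2 : Tendsto (fun w : ℂ => z₀ + w⁻¹)
            (𝓝[insert 0 Img] ((S.eta k s - z₀)⁻¹)) (𝓝[S.G] (S.eta k s)) := by
          rw [tendsto_nhdsWithin_iff]
          constructor
          · have hct : ContinuousAt (fun w : ℂ => z₀ + w⁻¹) ((S.eta k s - z₀)⁻¹) :=
              continuousAt_const.add (continuousAt_inv₀ hw₀0)
            have h4 := hct.tendsto.mono_left
              (nhdsWithin_le_nhds : 𝓝[insert 0 Img] ((S.eta k s - z₀)⁻¹) ≤ _)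
            have hval : z₀ + ((S.eta k s - z₀)⁻¹)⁻¹ = S.eta k s := by
              rw [inv_inv]; ring
            rwa [hval] at h4
          · filter_upwards [hev, self_mem_nhdsWithin] with w hw0 hwmem
            rcases hwmem with h | hwI
            · exact absurd h hw0
            · exact (himg w hwI).2
        have hnum : Tendsto (fun w : ℂ => f (z₀ + w⁻¹))
            (𝓝[insert 0 Img] ((S.eta k s - z₀)⁻¹)) (𝓝 (fb k s)) := (hBV k s).comp hmap2
        have hden : Tendsto (fun w : ℂ => w)
            (𝓝[insert 0 Img] ((S.eta k s - z₀)⁻¹)) (𝓝 ((S.eta k s - z₀)⁻¹)) :=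
          tendsto_id.mono_left nhdsWithin_le_nhds
        have hg0t : Tendsto g0 (𝓝[insert 0 Img] ((S.eta k s - z₀)⁻¹))
            (𝓝 (fb k s / (S.eta k s - z₀)⁻¹)) := hnum.div hden hw₀0
        apply hg0t.congr'
        filter_upwards [hev] with w hw
        exact (Function.update_of_ne hw _ _).symm
      · intro k s
        have hη : S.eta k s - z₀ ≠ 0 := RH_eta_ne S hz₀ k s
        have heq : (S.eta k s - z₀)⁻¹ * S.A k s * (fb k s / (S.eta k s - z₀)⁻¹)
            = S.A k s * fb k s := by
          field_simp
        rw [heq]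
        exact hRe k s
  · rintro ⟨fhat, hfe, hdf, fbh, hfbt, hRe⟩
    have hFeq : ∀ z ∈ S.G, f z = (z - z₀)⁻¹ * fhat ((z - z₀)⁻¹) := by
      intro z hz
      have h0 : (z - z₀)⁻¹ ≠ 0 := inv_ne_zero (hGne z hz)
      rw [hfe _ h0, inv_inv]
      have hz' : z₀ + (z - z₀) = z := by ring
      rw [hz']
      rw [← mul_div_assoc, mul_div_cancel_left₀ _ h0]
    have hmapsTo : ∀ z ∈ S.G, (z - z₀)⁻¹ ∈ insert 0 Img :=
      fun z hz => Set.mem_insert_of_mem _ ⟨z, hz, rfl⟩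
    refine ⟨⟨?_, ?_⟩, fun k s => (S.eta k s - z₀)⁻¹ * fbh k s, ?_, ?_⟩
    · apply DifferentiableOn.congr ?_ hFeq
      intro z hz
      have hinner : DifferentiableWithinAt ℂ (fun z : ℂ => (z - z₀)⁻¹) S.G z :=
        ((differentiableAt_id.sub (differentiableAt_const z₀)).inv
          (hGne z hz)).differentiableWithinAt
      exact hinner.mul (DifferentiableWithinAt.comp z (hdf _ (hmapsTo z hz)) hinner
        (fun x hx => hmapsTo x hx))
    · have h1 : Tendsto (fun z : ℂ => (z - z₀)⁻¹) (cocompact ℂ) (𝓝 0) := by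
        rw [tendsto_zero_iff_norm_tendsto_zero]
        have h2 : Tendsto (fun z : ℂ => ‖z‖ + -‖z₀‖) (cocompact ℂ) atTop :=
          tendsto_atTop_add_const_right _ _ tendsto_norm_cocompact_atTop
        have h3 : Tendsto (fun z : ℂ => ‖z - z₀‖) (cocompact ℂ) atTop := by
          refine tendsto_atTop_mono (fun z => ?_) h2
          have := norm_sub_norm_le z z₀
          linarith
        exact h3.inv_tendsto_atTop.congr fun z => (norm_inv _).symm
      have hcw : ContinuousWithinAt fhat (insert 0 Img) 0 :=
        hdf.continuousOn.continuousWithinAt (Set.mem_insert _ _)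
      have h4 : Tendsto (fun z : ℂ => (z - z₀)⁻¹) (cocompact ℂ) (𝓝[insert 0 Img] 0) := by
        rw [tendsto_nhdsWithin_iff]
        exact ⟨h1, hGev.mono fun z hz => hmapsTo z hz⟩
      have h5 : Tendsto (fun z : ℂ => (z - z₀)⁻¹ * fhat ((z - z₀)⁻¹)) (cocompact ℂ)
          (𝓝 (0 * fhat 0)) := h1.mul (hcw.tendsto.comp h4)
      rw [zero_mul] at h5
      exact h5.congr' (hGev.mono fun z hz => (hFeq z hz).symm)
    · intro k s
      have hη : S.eta k s - z₀ ≠ 0 := RH_eta_ne S hz₀ k s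
      have hmap3 : Tendsto (fun z : ℂ => (z - z₀)⁻¹) (𝓝[S.G] (S.eta k s))
          (𝓝[insert 0 Img] ((S.eta k s - z₀)⁻¹)) := by
        rw [tendsto_nhdsWithin_iff]
        constructor
        · exact (((continuousAt_id.sub continuousAt_const).inv₀ hη).tendsto).mono_left
            nhdsWithin_le_nhds
        · filter_upwards [self_mem_nhdsWithin] with z hz
          exact hmapsTo z hz
      have hc : Tendsto (fun z : ℂ => (z - z₀)⁻¹) (𝓝[S.G] (S.eta k s))
          (𝓝 ((S.eta k s - z₀)⁻¹)) := hmap3.mono_right nhdsWithin_le_nhds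
      have h6 : Tendsto (fun z : ℂ => (z - z₀)⁻¹ * fhat ((z - z₀)⁻¹)) (𝓝[S.G] (S.eta k s))
          (𝓝 ((S.eta k s - z₀)⁻¹ * fbh k s)) := hc.mul ((hfbt k s).comp hmap3)
      apply h6.congr'
      filter_upwards [self_mem_nhdsWithin] with z hz
      exact (hFeq z hz).symm
    · intro k s
      have heq : S.A k s * ((S.eta k s - z₀)⁻¹ * fbh k s)
          = (S.eta k s - z₀)⁻¹ * S.A k s * fbh k s := by ring
      rw [heq]
      exact hRe k s
end
end

section
/- With ζ(s) = 1/(η(s) − z₀) and Â(s) = ζ(s)A(s), one has the kernel identity (A(s)/A(t)) η̇(t)/(η(t) − η(s)) = (Â(s)/Â(t)) ζ̇(t)/(ζ(t) − ζ(s)) for all s ≠ t in J; consequently the generalized Neumann kernel N̂ formed with Â and ζ coincides with the generalized Neumann kernel N formed with A and η, and likewise M̂ = M. -/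
open Complex MeasureTheory Filter Topology

noncomputable section

/-- `ζ(s) = 1/(η(s) - z₀)`, the parametrization of the Möbius image of `Γ`. -/
def zetaP {m : ℕ} (S : RHSetup m) (z₀ : ℂ) (j : Fin m) (t : ℝ) : ℂ :=
  (S.eta j t - z₀)⁻¹

/-- `Â(s) = ζ(s)A(s)`. -/
def Ahat {m : ℕ} (S : RHSetup m) (z₀ : ℂ) (j : Fin m) (t : ℝ) : ℂ :=
  zetaP S z₀ j t * S.A j t

/-- The complex kernel `M̂(s,t) + i N̂(s,t)` formed with `Â` and `ζ`. -/
def kerHat {m : ℕ} (S : RHSetup m) (z₀ : ℂ) (k j : Fin m) (s t : ℝ) : ℂ :=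
  (1 / Real.pi) * (Ahat S z₀ k s / Ahat S z₀ j t) * deriv (zetaP S z₀ j) t /
    (zetaP S z₀ j t - zetaP S z₀ k s)

/-! The Möbius map `z ↦ 1/(z - z₀)` turns `η(t) - η(s)` into
`ζ(t) - ζ(s) = (η(s) - η(t)) ζ(t) ζ(s)` and, by the chain rule, `η̇(t)` into
`ζ̇(t) = -ζ(t)² η̇(t)`; the factor `ζ(s)/ζ(t)` carried by `Â(s)/Â(t)` is exactly
what cancels the remaining powers of `ζ`. -/

theorem cauchy_kernel_eq_inv_sub_const (a b d z w z₀ : ℂ) (hz : z ≠ z₀) (hw : w ≠ z₀) :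
    a / b * d / (z - w) =
      (w - z₀)⁻¹ * a / ((z - z₀)⁻¹ * b) * (-d / (z - z₀) ^ 2) /
        ((z - z₀)⁻¹ - (w - z₀)⁻¹) := by
  rcases eq_or_ne z w with rfl | hzw
  · simp -- both denominators vanish, and `x / 0 = 0`
  have hz' : z - z₀ ≠ 0 := sub_ne_zero.mpr hz
  have hw' : w - z₀ ≠ 0 := sub_ne_zero.mpr hw
  have hzw' : z - w ≠ 0 := sub_ne_zero.mpr hzw
  rw [inv_sub_inv hz' hw', show w - z₀ - (z - z₀) = -(z - w) by ring]
  field_simp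

section
variable {m : ℕ} (S : RHSetup m) (z₀ : ℂ)

theorem deriv_zetaP {j : Fin m} {t : ℝ} (ht : S.eta j t ≠ z₀) :
    deriv (zetaP S z₀ j) t = -deriv (S.eta j) t / (S.eta j t - z₀) ^ 2 :=
  ((((S.eta_smooth j).differentiable (by norm_num) t).hasDerivAt.sub_const z₀).fun_inv
    (sub_ne_zero.mpr ht)).deriv

theorem cauchy_kernel_eq_hat {k j : Fin m} {s t : ℝ} (hs : S.eta k s ≠ z₀)
    (ht : S.eta j t ≠ z₀) :
    S.A k s / S.A j t * deriv (S.eta j) t / (S.eta j t - S.eta k s) =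
      Ahat S z₀ k s / Ahat S z₀ j t * deriv (zetaP S z₀ j) t /
        (zetaP S z₀ j t - zetaP S z₀ k s) := by
  rw [deriv_zetaP S z₀ ht]
  exact cauchy_kernel_eq_inv_sub_const _ _ _ _ _ _ ht hs

theorem ker_eq_kerHat {k j : Fin m} {s t : ℝ} (hs : S.eta k s ≠ z₀)
    (ht : S.eta j t ≠ z₀) : S.ker k j s t = kerHat S z₀ k j s t := by
  have h := cauchy_kernel_eq_hat S z₀ hs ht
  simp only [RHSetup.ker, kerHat, mul_assoc, mul_div_assoc] at h ⊢
  rw [h]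

end

/-- With `ζ(s) = 1/(η(s) - z₀)` and `Â(s) = ζ(s)A(s)` one has
the kernel identity
`(A(s)/A(t)) η̇(t)/(η(t)-η(s)) = (Â(s)/Â(t)) ζ̇(t)/(ζ(t)-ζ(s))` whenever
`η(t) ≠ η(s)`; consequently the generalized Neumann kernel `N̂` formed with
`Â, ζ` coincides with the kernel `N` formed with `A, η`, and likewise `M̂ = M`. -/
theorem kernel_invariance_under_moebius {m : ℕ} (S : RHSetup m)
    (z₀ : ℂ) (hz₀ : ∀ k s, S.eta k s ≠ z₀) :
    ∀ k j s t, S.eta j t ≠ S.eta k s →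
      (S.A k s / S.A j t * deriv (S.eta j) t / (S.eta j t - S.eta k s) =
        Ahat S z₀ k s / Ahat S z₀ j t * deriv (zetaP S z₀ j) t /
          (zetaP S z₀ j t - zetaP S z₀ k s)) ∧
      (S.ker k j s t).im = (kerHat S z₀ k j s t).im ∧
      (S.ker k j s t).re = (kerHat S z₀ k j s t).re := by
  intro k j s t _
  have hker := ker_eq_kerHat S z₀ (hz₀ k s) (hz₀ j t)
  exact ⟨cauchy_kernel_eq_hat S z₀ (hz₀ k s) (hz₀ j t), by rw [hker], by rw [hker]⟩
end
end
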